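/- Assume h ≥ δ^μ, let h̃ := min{ h, (h + δ^μ)/2 }, and assume the positive reals λ₁,…,λ_d satisfy (λ₁ + ⋯ + λ_{j−1})/λ_j < h̃ for all j = 2,…,d. Then for each q ∈ {1,…,N}, the map 𝐣 ↦ a_q^𝐣 is strictly increasing with respect to the row-major order on {−1,…,J−1}^d (i.e., the lexicographic order on the reversed tuples (j_d, j_{d−1}, …, j₁)): if (j_d,…,j₁) precedes (j′_d,…,j′₁) lexicographically, then a_q^𝐣 < a_q^{𝐣′}. Moreover a_q^{(−1,…,−1)} = 0 and a_q^{(J−1,…,J−1)} = λ₁ + ⋯ + λ_d. -/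

import Mathlib

noncomputable section

/-- The smeared-out Heaviside shape function `S(z) = z - sin(2πz)/(2π)`. -/
def Sfun (z : ℝ) : ℝ := z - Real.sin (2 * Real.pi * z) / (2 * Real.pi)

/-- The quintic shape function `P(z) = z³(6z² - 15z + 10)`. -/
def Pfun (z : ℝ) : ℝ := z ^ 3 * (6 * z ^ 2 - 15 * z + 10)

/-- The inner function `ψ_q(x) = φ(x + (1-q)δ) - φ((1-q)δ)`. -/
def psi (φ : ℝ → ℝ) (δ : ℝ) (q : ℕ) (x : ℝ) : ℝ :=
  φ (x + (1 - (q : ℝ)) * δ) - φ ((1 - (q : ℝ)) * δ)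

/-- The hypercube center coordinate `c_q^j`, with the boundary conventions
`c_q^{-1} = 0` and `c_q^{J-1} = 1`. -/
def center (h δ : ℝ) (J : ℕ) (q : ℕ) (j : ℤ) : ℝ :=
  if j = -1 then 0
  else if j = (J : ℤ) - 1 then 1
  else (j : ℝ) * h + (h + δ) / 2 + ((q : ℝ) - 1) * δ

/-- The mapped hypercube center `a_q^jv = Ψ_q(𝐜_q^jv) = Σ_p λ_p ψ_q(c_q^{j_p})`. -/
def amap (φ : ℝ → ℝ) (h δ : ℝ) (J : ℕ) {d : ℕ} (lam : Fin d → ℝ)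
    (q : ℕ) (jv : Fin d → ℤ) : ℝ :=
  ∑ p, lam p * psi φ δ q (center h δ J q (jv p))

/-! Each coordinate value `ψ_q(c_q^j)` is `0` for `j = -1`, `1` for `j = J - 1`, and otherwise
the value of `φ` at the midpoint `jh + (h + δ)/2` of a quintic ramp, namely `jh + (h + δ^μ)/2`,
shifted by `-φ((1 - q)δ) ∈ [0, h - δ^μ]`. Hence distinct indices are at least
`h̃ = min h ((h + δ^μ)/2)` apart in value, while all values lie in `[0, 1]`. Comparing `a_q^𝐣` and
`a_q^𝐣'` at the last coordinate `m` where `𝐣` and `𝐣'` differ, coordinate `m` gains at least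
`λ_m h̃`, and the Sprecher condition says this beats the total `λ₁ + ⋯ + λ_{m-1}` that the earlier
coordinates can lose. -/

open Finset

theorem Pfun_half : Pfun (1 / 2) = 1 / 2 := by norm_num [Pfun]

theorem Pfun_mem_Icc {z : ℝ} (hz : z ∈ Set.Icc 0 1) : Pfun z ∈ Set.Icc 0 1 := by
  obtain ⟨hz0, hz1⟩ := hz
  have hsq : 0 ≤ 6 * z ^ 2 - 15 * z + 10 := by nlinarith [sq_nonneg (z - 1)]
  constructor
  · exact mul_nonneg (pow_nonneg hz0 3) hsq
  · -- `1 - P(z) = (1 - z)³ (6z² + 3z + 1)`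
    have h1z : 0 ≤ (1 - z) ^ 3 * (6 * z ^ 2 + 3 * z + 1) :=
      mul_nonneg (pow_nonneg (by linarith) 3) (by positivity)
    unfold Pfun
    nlinarith

/-- The quintic branch of `φ`, with `c` in place of `δ^μ`. -/
def HasQuinticRamps (φ : ℝ → ℝ) (h δ c : ℝ) : Prop :=
  ∀ j : ℤ, ∀ t ∈ Set.Icc ((j : ℝ) * h + δ) (((j : ℝ) + 1) * h),
    φ t = (j : ℝ) * h + c + (h - c) * Pfun ((t - (j : ℝ) * h - δ) / (h - δ))

namespace HasQuinticRamps

variable {φ : ℝ → ℝ} {h δ c : ℝ}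

theorem apply_add_int_mul (hφ : HasQuinticRamps φ h δ c) {j : ℤ} {t : ℝ}
    (ht : t ∈ Set.Icc ((j : ℝ) * h + δ) (((j : ℝ) + 1) * h)) (k : ℤ) :
    φ (t + k * h) = φ t + k * h := by
  have htk : t + k * h ∈ Set.Icc (((j + k : ℤ) : ℝ) * h + δ) ((((j + k : ℤ) : ℝ) + 1) * h) := by
    push_cast
    constructor <;> linarith [ht.1, ht.2]
  rw [hφ (j + k) _ htk, hφ j _ ht]
  push_cast
  ring_nf

theorem mem_Icc (hφ : HasQuinticRamps φ h δ c) (hch : c ≤ h) {j : ℤ} {t : ℝ}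
    (ht : t ∈ Set.Icc ((j : ℝ) * h + δ) (((j : ℝ) + 1) * h)) :
    φ t ∈ Set.Icc ((j : ℝ) * h + c) (((j : ℝ) + 1) * h) := by
  obtain ⟨ht0, ht1⟩ := ht
  have hz : (t - j * h - δ) / (h - δ) ∈ Set.Icc 0 1 :=
    ⟨div_nonneg (by linarith) (by linarith), div_le_one_of_le₀ (by linarith) (by linarith)⟩
  obtain ⟨hP0, hP1⟩ := Pfun_mem_Icc hz
  rw [hφ j t ⟨ht0, ht1⟩]
  constructor <;> nlinarith

theorem apply_midpoint (hφ : HasQuinticRamps φ h δ c) (hδh : δ < h) (j : ℤ) :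
    φ (j * h + (h + δ) / 2) = j * h + (h + c) / 2 := by
  have hmid : (j : ℝ) * h + (h + δ) / 2 ∈ Set.Icc ((j : ℝ) * h + δ) (((j : ℝ) + 1) * h) :=
    ⟨by linarith, by linarith⟩
  have hz : ((j : ℝ) * h + (h + δ) / 2 - j * h - δ) / (h - δ) = 1 / 2 := by
    field_simp [(sub_pos.2 hδh).ne']
    ring
  rw [hφ j _ hmid, hz, Pfun_half]
  ring

end HasQuinticRamps

theorem one_sub_mul_mem_Icc {h δ : ℝ} {q : ℕ} (hq : 1 ≤ q) (hδ : 0 ≤ δ) (hqh : q * δ ≤ h) :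
    (1 - (q : ℝ)) * δ ∈ Set.Icc (((-1 : ℤ) : ℝ) * h + δ) ((((-1 : ℤ) : ℝ) + 1) * h) := by
  have hq' : (1 : ℝ) ≤ q := by exact_mod_cast hq
  push_cast
  constructor <;> nlinarith

section Centers

variable {φ : ℝ → ℝ} {h δ c : ℝ} {J q : ℕ}

theorem psi_center_neg_one : psi φ δ q (center h δ J q (-1)) = 0 := by
  simp [psi, center]

theorem psi_center_top (hφ : HasQuinticRamps φ h δ c) (hJh : (J : ℝ) * h = 1) (hq : 1 ≤ q)
    (hδ : 0 ≤ δ) (hqh : q * δ ≤ h) :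
    psi φ δ q (center h δ J q ((J : ℤ) - 1)) = 1 := by
  have hJ : J ≠ 0 := by
    rintro rfl
    simp at hJh
  have hc : center h δ J q ((J : ℤ) - 1) = 1 := by
    rw [center, if_neg (by omega), if_pos rfl]
  -- `1 = J h`, and `φ` commutes with translations by multiples of `h`
  have hshift := hφ.apply_add_int_mul (one_sub_mul_mem_Icc hq hδ hqh) J
  rw [Int.cast_natCast, hJh] at hshift
  rw [hc, psi, add_comm, hshift]
  ring

theorem psi_center_of_nonneg (hφ : HasQuinticRamps φ h δ c) (hδh : δ < h) {j : ℤ}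
    (hj : 0 ≤ j) (hjJ : j ≤ (J : ℤ) - 2) :
    psi φ δ q (center h δ J q j) = j * h + (h + c) / 2 - φ ((1 - q) * δ) := by
  rw [center, if_neg (by omega), if_neg (by omega), psi,
    show (j : ℝ) * h + (h + δ) / 2 + ((q : ℝ) - 1) * δ + (1 - q) * δ = j * h + (h + δ) / 2 by ring,
    hφ.apply_midpoint hδh]

theorem psi_center_add_min_le (hφ : HasQuinticRamps φ h δ c) (hch : c ≤ h) (hJh : (J : ℝ) * h = 1)
    (hq : 1 ≤ q) (hδ : 0 ≤ δ) (hδh : δ < h) (hqh : q * δ ≤ h) {j j' : ℤ}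
    (hj : -1 ≤ j) (hjj' : j < j') (hj' : j' ≤ (J : ℤ) - 1) :
    psi φ δ q (center h δ J q j) + min h ((h + c) / 2) ≤ psi φ δ q (center h δ J q j') := by
  have hmin := min_le_right h ((h + c) / 2)
  have hJ : (1 : ℝ) ≤ J := by exact_mod_cast (show 1 ≤ (J : ℤ) by omega)
  obtain ⟨hφ0, hφ1⟩ := hφ.mem_Icc hch (one_sub_mul_mem_Icc hq hδ hqh)
  push_cast at hφ0 hφ1
  rcases eq_or_lt_of_le hj with rfl | hj
  · rw [psi_center_neg_one]
    rcases eq_or_lt_of_le hj' with rfl | hj'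
    · rw [psi_center_top hφ hJh hq hδ hqh]
      nlinarith [min_le_left h ((h + c) / 2)]
    · rw [psi_center_of_nonneg hφ hδh (by omega) (by omega)]
      have : (0 : ℝ) ≤ j' := by exact_mod_cast (show 0 ≤ j' by omega)
      nlinarith
  · rw [psi_center_of_nonneg hφ hδh (by omega) (by omega)]
    rcases eq_or_lt_of_le hj' with rfl | hj'
    · rw [psi_center_top hφ hJh hq hδ hqh]
      have : (j : ℝ) + 2 ≤ J := by exact_mod_cast (show j + 2 ≤ (J : ℤ) by omega)
      nlinarith
    · rw [psi_center_of_nonneg hφ hδh (by omega) (by omega)]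
      have : (j : ℝ) + 1 ≤ j' := by exact_mod_cast (show j + 1 ≤ j' by omega)
      nlinarith [min_le_left h ((h + c) / 2)]

theorem psi_center_mem_Icc (hφ : HasQuinticRamps φ h δ c) (hc : 0 ≤ c) (hch : c ≤ h)
    (hJh : (J : ℝ) * h = 1) (hq : 1 ≤ q) (hδ : 0 ≤ δ) (hδh : δ < h) (hqh : q * δ ≤ h) {j : ℤ}
    (hj : -1 ≤ j) (hj' : j ≤ (J : ℤ) - 1) :
    psi φ δ q (center h δ J q j) ∈ Set.Icc 0 1 := by
  have hmin : 0 ≤ min h ((h + c) / 2) := le_min (by linarith) (by linarith)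
  constructor
  · rcases eq_or_lt_of_le hj with rfl | hj
    · rw [psi_center_neg_one]
    · have := psi_center_add_min_le hφ hch hJh hq hδ hδh hqh le_rfl hj hj'
      rw [psi_center_neg_one] at this
      linarith
  · rcases eq_or_lt_of_le hj' with rfl | hj'
    · rw [psi_center_top hφ hJh hq hδ hqh]
    · have := psi_center_add_min_le hφ hch hJh hq hδ hδh hqh hj hj' le_rfl
      rw [psi_center_top hφ hJh hq hδ hqh] at this
      linarith

end Centers

theorem sum_filter_lt_lt_mul_of_div_lt {d : ℕ} {lam : Fin d → ℝ} {M : ℝ} (hlam : ∀ p, 0 < lam p)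
    (hM : 0 < M)
    (hS : ∀ j : Fin d, j.val ≠ 0 → (∑ i ∈ univ.filter (fun i => i < j), lam i) / lam j < M)
    (m : Fin d) : ∑ i ∈ univ.filter (fun i => i < m), lam i < lam m * M := by
  by_cases hm : m.val = 0
  · have hempty : univ.filter (fun i => i < m) = ∅ :=
      filter_false_of_mem fun i _ => by rw [Fin.lt_def, hm]; omega
    rw [hempty, sum_empty]
    exact mul_pos (hlam m) hM
  · rw [mul_comm, ← div_lt_iff₀ (hlam m)]
    exact hS m hm

theorem sum_mul_lt_sum_mul_of_rowMajor {d : ℕ} {lam x y : Fin d → ℝ} {M : ℝ}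
    (hlam : ∀ p, 0 ≤ lam p) (hx : ∀ p, x p ∈ Set.Icc 0 1) (hy : ∀ p, y p ∈ Set.Icc 0 1)
    {m : Fin d} (hm : x m + M ≤ y m) (heq : ∀ l, m < l → x l = y l)
    (hsmall : ∑ i ∈ univ.filter (fun i => i < m), lam i < lam m * M) :
    ∑ p, lam p * x p < ∑ p, lam p * y p := by
  rw [← sub_pos, ← sum_sub_distrib, ← sum_filter_add_sum_filter_not univ (fun i => i < m)]
  have hlow : ∀ p ∈ univ.filter (fun i => i < m), -lam p ≤ lam p * y p - lam p * x p := by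
    intro p _
    nlinarith [hlam p, (hx p).2, (hy p).1]
  have hfirst := sum_le_sum hlow
  rw [sum_neg_distrib] at hfirst
  have hpos : 0 ≤ ∑ i ∈ univ.filter (fun i => i < m), lam i := sum_nonneg fun i _ => hlam i
  have hmM : lam m * M ≤ lam m * y m - lam m * x m := by
    rw [← mul_sub]
    exact mul_le_mul_of_nonneg_left (by linarith) (hlam m)
  have hlast : lam m * y m - lam m * x m ≤
      ∑ p ∈ univ.filter (fun i => ¬ i < m), (lam p * y p - lam p * x p) := by
    refine single_le_sum (f := fun p => lam p * y p - lam p * x p) (fun p hp => ?_) (by simp)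
    rcases eq_or_lt_of_le (not_lt.1 (mem_filter.1 hp).2) with rfl | hmp
    · linarith
    · simp [heq p hmp]
  linarith

theorem amap_rowMajor_strictMono_general
    (N : ℕ) (hN : 2 ≤ N) (δ : ℝ) (hδ : 0 < δ) (μ : ℝ)
    (h : ℝ) (hh : h = (N : ℝ) * δ)
    (φ : ℝ → ℝ)
    (hφP : ∀ j : ℤ, ∀ t ∈ Set.Icc ((j : ℝ) * h + δ) (((j : ℝ) + 1) * h),
      φ t = (j : ℝ) * h + δ ^ μ + (h - δ ^ μ) * Pfun ((t - (j : ℝ) * h - δ) / (h - δ)))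
    (J : ℕ) (hJh : (J : ℝ) * h = 1)
    (d : ℕ) (lam : Fin d → ℝ) (hlam : ∀ p, 0 < lam p)
    (hle : δ ^ μ ≤ h)
    (hsprecher : ∀ j : Fin d, j.val ≠ 0 →
      (∑ i ∈ Finset.univ.filter (fun i => i < j), lam i) / lam j <
        min h ((h + δ ^ μ) / 2)) :
    ∀ q : ℕ, 1 ≤ q → q ≤ N →
      (∀ jv jv' : Fin d → ℤ,
        (∀ p, -1 ≤ jv p ∧ jv p ≤ (J : ℤ) - 1) →
        (∀ p, -1 ≤ jv' p ∧ jv' p ≤ (J : ℤ) - 1) →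
        (∃ m : Fin d, jv m < jv' m ∧ ∀ l, m < l → jv l = jv' l) →
        amap φ h δ J lam q jv < amap φ h δ J lam q jv') ∧
      amap φ h δ J lam q (fun _ => -1) = 0 ∧
      amap φ h δ J lam q (fun _ => (J : ℤ) - 1) = ∑ p, lam p := by
  intro q hq hqN
  have hφ : HasQuinticRamps φ h δ (δ ^ μ) := hφP
  have hcpos : 0 < δ ^ μ := Real.rpow_pos_of_pos hδ μ
  have hδh : δ < h := by
    rw [hh]
    exact lt_mul_of_one_lt_left hδ (by exact_mod_cast hN)
  have hqh : (q : ℝ) * δ ≤ h := by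
    rw [hh]
    exact mul_le_mul_of_nonneg_right (by exact_mod_cast hqN) hδ.le
  refine ⟨?_, by simp [amap, psi_center_neg_one], by simp [amap, psi_center_top hφ hJh hq hδ.le hqh]⟩
  rintro jv jv' hjv hjv' ⟨m, hlt, heq⟩
  have hM : 0 < min h ((h + δ ^ μ) / 2) := lt_min (by linarith) (by linarith)
  exact sum_mul_lt_sum_mul_of_rowMajor (fun p => (hlam p).le)
    (fun p => psi_center_mem_Icc hφ hcpos.le hle hJh hq hδ.le hδh hqh (hjv p).1 (hjv p).2)
    (fun p => psi_center_mem_Icc hφ hcpos.le hle hJh hq hδ.le hδh hqh (hjv' p).1 (hjv' p).2)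
    (psi_center_add_min_le hφ hle hJh hq hδ.le hδh hqh (hjv m).1 hlt (hjv' m).2)
    (fun l hl => by rw [heq l hl])
    (sum_filter_lt_lt_mul_of_div_lt hlam hM hsprecher m)

/-- for Sprecher-like λ, the mapped centers are strictly increasing in row-major order. -/
theorem amap_rowMajor_strictMono
    (N : ℕ) (hN : 2 ≤ N) (δ : ℝ) (hδ : 0 < δ) (μ : ℝ) (hμ : 0 < μ)
    (h : ℝ) (hh : h = (N : ℝ) * δ)
    (φ : ℝ → ℝ)
    (hφS : ∀ j : ℤ, ∀ t ∈ Set.Icc ((j : ℝ) * h) ((j : ℝ) * h + δ),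
      φ t = (j : ℝ) * h + δ ^ μ * Sfun ((t - (j : ℝ) * h) / δ))
    (hφP : ∀ j : ℤ, ∀ t ∈ Set.Icc ((j : ℝ) * h + δ) (((j : ℝ) + 1) * h),
      φ t = (j : ℝ) * h + δ ^ μ + (h - δ ^ μ) * Pfun ((t - (j : ℝ) * h - δ) / (h - δ)))
    (J : ℕ) (hJ : 0 < J) (hJh : (J : ℝ) * h = 1)
    (d : ℕ) (hd : 2 ≤ d) (lam : Fin d → ℝ) (hlam : ∀ p, 0 < lam p)
    (hle : δ ^ μ ≤ h)
    (hsprecher : ∀ j : Fin d, j.val ≠ 0 →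
      (∑ i ∈ Finset.univ.filter (fun i => i < j), lam i) / lam j <
        min h ((h + δ ^ μ) / 2)) :
    ∀ q : ℕ, 1 ≤ q → q ≤ N →
      (∀ jv jv' : Fin d → ℤ,
        (∀ p, -1 ≤ jv p ∧ jv p ≤ (J : ℤ) - 1) →
        (∀ p, -1 ≤ jv' p ∧ jv' p ≤ (J : ℤ) - 1) →
        (∃ m : Fin d, jv m < jv' m ∧ ∀ l, m < l → jv l = jv' l) →
        amap φ h δ J lam q jv < amap φ h δ J lam q jv') ∧
      amap φ h δ J lam q (fun _ => -1) = 0 ∧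
      amap φ h δ J lam q (fun _ => (J : ℤ) - 1) = ∑ p, lam p :=
  amap_rowMajor_strictMono_general N hN δ hδ μ h hh φ hφP J hJh d lam hlam hle hsprecher
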